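/- Pfaffian form of an even de Bruijn integral: for n ≥ 1 and an integrable skew-symmetric kernel F(y,z) = e^{V(y)+V(z)} sg(z-y) on E×E (with E ⊂ ℝ measurable and all moments finite), ∫_{ℝ^{2n}} Δ_{2n}(z) Π_{j=0}^{n-1} sg(z_{2j+1} - z_{2j}) Π_{i=0}^{2n-1} e^{V(z_i)} 1_E(z_i) dz_i = 2^n n! · Pf((μ_{kℓ})_{0≤k,ℓ≤2n-1}), where μ_{kℓ} = ∬_{E²} y^k z^ℓ e^{V(y)+V(z)} sg(z-y) dy dz and Δ_{2n}(z) = Π_{i<j}(z_j - z_i). -/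

import Mathlib

open Matrix

/-- The Pfaffian of a `2n × 2n` matrix, defined by
`Pf(A) = (1/(2^n n!)) ∑_{σ ∈ S_{2n}} sgn(σ) ∏_{j=0}^{n-1} A_{σ(2j), σ(2j+1)}`. -/
noncomputable def pf (n : ℕ) (A : Matrix (Fin (2 * n)) (Fin (2 * n)) ℝ) : ℝ :=
  (1 / ((2 : ℝ) ^ n * n.factorial)) *
    ∑ σ : Equiv.Perm (Fin (2 * n)),
      ((Equiv.Perm.sign σ : ℤ) : ℝ) *
        ∏ j : Fin n,
          A (σ ⟨2 * j.1, by have := j.isLt; omega⟩) (σ ⟨2 * j.1 + 1, by have := j.isLt; omega⟩)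

section DeBruijnAux
open MeasureTheory

lemma prod_pairs {m : ℕ} (f : Fin m → Fin m → ℝ) :
    ∏ p ∈ Finset.univ.filter (fun p : Fin m × Fin m => p.1 < p.2), f p.1 p.2
      = ∏ i, ∏ j ∈ Finset.Ioi i, f i j := by
  rw [Finset.prod_sigma']
  refine Finset.prod_nbij' (fun p => ⟨p.1, p.2⟩) (fun q => (q.1, q.2)) ?_ ?_ ?_ ?_ ?_ <;>
    simp [Finset.mem_Ioi]

lemma vand_sum (m : ℕ) (z : Fin m → ℝ) :
    (∏ p ∈ Finset.univ.filter (fun p : Fin m × Fin m => p.1 < p.2), (z p.2 - z p.1))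
      = ∑ σ : Equiv.Perm (Fin m), ((Equiv.Perm.sign σ : ℤ) : ℝ) * ∏ i, z i ^ ((σ i : Fin m) : ℕ) := by
  rw [prod_pairs (fun i j => z j - z i), ← Matrix.det_vandermonde, ← Matrix.det_transpose,
    Matrix.det_apply']
  simp [Matrix.vandermonde]

def pairEquiv (n : ℕ) : (Fin n ⊕ Fin n) ≃ Fin (2 * n) where
  toFun := Sum.elim (fun j => ⟨2 * j.1, by have := j.isLt; omega⟩)
    (fun j => ⟨2 * j.1 + 1, by have := j.isLt; omega⟩)
  invFun i := if h : i.1 % 2 = 0 then Sum.inl ⟨i.1 / 2, by have := i.isLt; omega⟩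
    else Sum.inr ⟨i.1 / 2, by have := i.isLt; omega⟩
  left_inv s := by
    rcases s with j | j <;> simp only [Sum.elim_inl, Sum.elim_inr] <;>
      [simp only [show 2 * j.1 % 2 = 0 by omega, ↓reduceDIte]; simp only [show ¬ (2 * j.1 + 1) % 2 = 0 by omega, ↓reduceDIte]] <;> congr 1 <;> exact Fin.ext (by simp only [Fin.val_mk]; omega)
  right_inv i := by
    by_cases h : i.1 % 2 = 0
    · simp only [dif_pos h, Sum.elim_inl]; exact Fin.ext (by simp only [Fin.val_mk]; omega)
    · simp only [dif_neg h, Sum.elim_inr]; exact Fin.ext (by simp only [Fin.val_mk]; omega)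

noncomputable def pairT (n : ℕ) : (Fin n → ℝ × ℝ) ≃ᵐ (Fin (2 * n) → ℝ) :=
  (MeasurableEquiv.arrowProdEquivProdArrow ℝ ℝ (Fin n)).trans
    ((MeasurableEquiv.sumPiEquivProdPi (fun _ : Fin n ⊕ Fin n => ℝ)).symm.trans
      (MeasurableEquiv.piCongrLeft (fun _ : Fin (2 * n) => ℝ) (pairEquiv n)))

lemma pairT_mp (n : ℕ) : MeasurePreserving (pairT n) volume volume :=
  ((volume_measurePreserving_piCongrLeft (fun _ : Fin (2 * n) => ℝ) (pairEquiv n)).comp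
    ((volume_measurePreserving_sumPiEquivProdPi_symm (fun _ : Fin n ⊕ Fin n => ℝ)).comp
      (volume_measurePreserving_arrowProdEquivProdArrow ℝ ℝ (Fin n))))

lemma pairT_apply (n : ℕ) (w : Fin n → ℝ × ℝ) (s : Fin n ⊕ Fin n) :
    pairT n w (pairEquiv n s) = Sum.elim (fun j => (w j).1) (fun j => (w j).2) s := by
  simp only [pairT, MeasurableEquiv.trans_apply, MeasurableEquiv.coe_piCongrLeft,
    Equiv.piCongrLeft_apply_apply]
  rcases s with j | j <;> rfl

end DeBruijnAux

open MeasureTheory Real in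
/-- Pfaffian form of an even de Bruijn integral: for `n ≥ 1`,
`∫_{ℝ^{2n}} Δ_{2n}(z) ∏_{j=0}^{n-1} sg(z_{2j+1}-z_{2j}) ∏_{i=0}^{2n-1} e^{V(z_i)} 1_E(z_i) dz`
equals `2^n n! Pf((μ_{kℓ})_{0≤k,ℓ≤2n-1})`, where
`μ_{kℓ} = ∬_{E²} y^k z^ℓ e^{V(y)+V(z)} sg(z-y) dy dz`. -/
theorem stmt8 (n : ℕ) (hn : 1 ≤ n) (E : Set ℝ) (hE : MeasurableSet E)
    (V : ℝ → ℝ) (hV : Measurable V)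
    (μ : Matrix (Fin (2 * n)) (Fin (2 * n)) ℝ)
    (hμ : ∀ k l : Fin (2 * n), μ k l =
      ∫ p : ℝ × ℝ,
        E.indicator (fun y => y ^ (k : ℕ) * Real.exp (V y)) p.1 *
          E.indicator (fun x => x ^ (l : ℕ) * Real.exp (V x)) p.2 *
          Real.sign (p.2 - p.1))
    (hμint : ∀ k l : ℕ, Integrable (fun p : ℝ × ℝ =>
      E.indicator (fun y => y ^ k * Real.exp (V y)) p.1 *
        E.indicator (fun x => x ^ l * Real.exp (V x)) p.2 *
        Real.sign (p.2 - p.1)))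
    (hbig : Integrable (fun z : Fin (2 * n) → ℝ =>
      (∏ p ∈ Finset.univ.filter (fun p : Fin (2 * n) × Fin (2 * n) => p.1 < p.2),
          (z p.2 - z p.1)) *
        (∏ j : Fin n, Real.sign (z ⟨2 * j.1 + 1, by have := j.isLt; omega⟩
            - z ⟨2 * j.1, by have := j.isLt; omega⟩)) *
        ∏ i, E.indicator (fun x => Real.exp (V x)) (z i))) :
    ∫ z : Fin (2 * n) → ℝ,
      (∏ p ∈ Finset.univ.filter (fun p : Fin (2 * n) × Fin (2 * n) => p.1 < p.2),
          (z p.2 - z p.1)) *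
        (∏ j : Fin n, Real.sign (z ⟨2 * j.1 + 1, by have := j.isLt; omega⟩
            - z ⟨2 * j.1, by have := j.isLt; omega⟩)) *
        ∏ i, E.indicator (fun x => Real.exp (V x)) (z i)
    = 2 ^ n * n.factorial * pf n μ := by
  classical
  set g : ℕ → ℝ → ℝ := fun k => E.indicator (fun y => y ^ k * Real.exp (V y)) with hg
  set G : ℕ → ℕ → ℝ × ℝ → ℝ := fun k l p => g k p.1 * g l p.2 * Real.sign (p.2 - p.1) with hG
  have hGint : ∀ k l : ℕ, Integrable (G k l) := fun k l => hμint k l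
  have hμ' : ∀ k l : Fin (2 * n), (∫ p : ℝ × ℝ, G (k : ℕ) (l : ℕ) p) = μ k l :=
    fun k l => (hμ k l).symm
  rw [← (pairT_mp n).integral_comp']
  have key : ∀ w : Fin n → ℝ × ℝ,
      ((∏ p ∈ Finset.univ.filter (fun p : Fin (2 * n) × Fin (2 * n) => p.1 < p.2),
          (pairT n w p.2 - pairT n w p.1)) *
        (∏ j : Fin n, Real.sign (pairT n w ⟨2 * j.1 + 1, by have := j.isLt; omega⟩
            - pairT n w ⟨2 * j.1, by have := j.isLt; omega⟩)) *
        ∏ i, E.indicator (fun x => Real.exp (V x)) (pairT n w i))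
      = ∑ σ : Equiv.Perm (Fin (2 * n)), ((Equiv.Perm.sign σ : ℤ) : ℝ) *
          ∏ j : Fin n, G ((σ (pairEquiv n (Sum.inl j)) : Fin (2 * n)) : ℕ)
            ((σ (pairEquiv n (Sum.inr j)) : Fin (2 * n)) : ℕ) (w j) := by
    intro w
    have hz1 : ∀ j : Fin n, pairT n w (pairEquiv n (Sum.inl j)) = (w j).1 :=
      fun j => pairT_apply n w (Sum.inl j)
    have hz2 : ∀ j : Fin n, pairT n w (pairEquiv n (Sum.inr j)) = (w j).2 :=
      fun j => pairT_apply n w (Sum.inr j)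
    rw [vand_sum, Finset.sum_mul, Finset.sum_mul]
    refine Finset.sum_congr rfl fun σ _ => ?_
    rw [mul_assoc, mul_assoc]
    congr 1
    calc (∏ i, pairT n w i ^ ((σ i : Fin (2 * n)) : ℕ)) *
          ((∏ j : Fin n, Real.sign (pairT n w ⟨2 * j.1 + 1, by have := j.isLt; omega⟩
              - pairT n w ⟨2 * j.1, by have := j.isLt; omega⟩)) *
            ∏ i, E.indicator (fun x => Real.exp (V x)) (pairT n w i))
        = ((∏ i, pairT n w i ^ ((σ i : Fin (2 * n)) : ℕ)) *
            ∏ i, E.indicator (fun x => Real.exp (V x)) (pairT n w i)) *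
          ∏ j : Fin n, Real.sign ((w j).2 - (w j).1) := by
          have : ∀ j : Fin n,
              (pairT n w ⟨2 * j.1 + 1, by have := j.isLt; omega⟩ : ℝ)
                - pairT n w ⟨2 * j.1, by have := j.isLt; omega⟩ = (w j).2 - (w j).1 := by
            intro j; rw [show (⟨2 * j.1 + 1, by have := j.isLt; omega⟩ : Fin (2 * n))
              = pairEquiv n (Sum.inr j) from rfl, show (⟨2 * j.1, by have := j.isLt; omega⟩
              : Fin (2 * n)) = pairEquiv n (Sum.inl j) from rfl, hz1, hz2]
          simp_rw [this]; ring
      _ = (∏ i, g ((σ i : Fin (2 * n)) : ℕ) (pairT n w i)) *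
          ∏ j : Fin n, Real.sign ((w j).2 - (w j).1) := by
          congr 1
          rw [← Finset.prod_mul_distrib]
          refine Finset.prod_congr rfl fun i _ => ?_
          by_cases h : pairT n w i ∈ E <;>
            simp [hg, Set.indicator_of_mem, Set.indicator_of_notMem, h]
      _ = ((∏ j : Fin n, g ((σ (pairEquiv n (Sum.inl j)) : Fin (2 * n)) : ℕ) ((w j).1)) *
            ∏ j : Fin n, g ((σ (pairEquiv n (Sum.inr j)) : Fin (2 * n)) : ℕ) ((w j).2)) *
          ∏ j : Fin n, Real.sign ((w j).2 - (w j).1) := by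
          congr 1
          rw [← Equiv.prod_comp (pairEquiv n)
            (fun i => g ((σ i : Fin (2 * n)) : ℕ) (pairT n w i)), Fintype.prod_sum_type]
          simp_rw [hz1, hz2]
      _ = ∏ j : Fin n, G ((σ (pairEquiv n (Sum.inl j)) : Fin (2 * n)) : ℕ)
            ((σ (pairEquiv n (Sum.inr j)) : Fin (2 * n)) : ℕ) (w j) := by
          rw [hG, Finset.prod_mul_distrib, Finset.prod_mul_distrib]
  rw [show (fun w : Fin n → ℝ × ℝ =>
      ((∏ p ∈ Finset.univ.filter (fun p : Fin (2 * n) × Fin (2 * n) => p.1 < p.2),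
          (pairT n w p.2 - pairT n w p.1)) *
        (∏ j : Fin n, Real.sign (pairT n w ⟨2 * j.1 + 1, by have := j.isLt; omega⟩
            - pairT n w ⟨2 * j.1, by have := j.isLt; omega⟩)) *
        ∏ i, E.indicator (fun x => Real.exp (V x)) (pairT n w i)))
    = fun w => ∑ σ : Equiv.Perm (Fin (2 * n)), ((Equiv.Perm.sign σ : ℤ) : ℝ) *
          ∏ j : Fin n, G ((σ (pairEquiv n (Sum.inl j)) : Fin (2 * n)) : ℕ)
            ((σ (pairEquiv n (Sum.inr j)) : Fin (2 * n)) : ℕ) (w j) from funext key]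
  rw [integral_finset_sum _ (fun σ _ =>
    (show Integrable _ volume from (Integrable.fintype_prod (fun j => hGint _ _)).const_mul _))]
  simp_rw [integral_const_mul, integral_fintype_prod_volume_eq_prod (ι := Fin n)
    (fun j => G _ _), hμ']
  rw [pf, ← mul_assoc, mul_one_div, div_self (by positivity), one_mul]
  rfl
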